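/- arXiv:1606.01054 — 2 statements merged into one kernel-verified Lean document; each statement's English description precedes it below -/
import Mathlib

section
/- Assume P satisfies P ∈ C¹([0,∞)), P(0)=0, P' > 0, 0 < (γP(Z) − P'(Z)Z)/Z ≤ c for Z > 0, and lim_{Z→∞} P(Z)/Z^γ = p_∞ > 0, with γ > 1. Let s₁(ρ,θ) = M(ρ θ^{−1/(γ−1)}) where M' (Z) = −(1/(γ−1))(γP(Z) − P'(Z)Z)/Z² and lim_{Z→∞} M(Z) = 0. Then there is a constant C such that s₁(ρ,θ) ≤ C(1 + |log ρ|) for all ρ ∈ (0,∞), θ ∈ (0,1). -/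
open Set Filter

/-!
`M` is nonincreasing on `(0, ∞)`, and `|M'(Z)| ≤ K / Z` with `K = c / (γ - 1)` makes
`M + K log` nondecreasing there. Hence `M Z ≤ M 1 + K |log Z|` for every `Z > 0`. Since
`θ^{-1/(γ-1)} ≥ 1` for `θ ∈ (0, 1)`, monotonicity gives `s₁(ρ, θ) ≤ M ρ`, and the bound follows.
-/

namespace Real

variable {M M' : ℝ → ℝ} {K : ℝ}

theorem antitoneOn_Ioi_of_hasDerivAt_nonpos (hM : ∀ x, 0 < x → HasDerivAt M (M' x) x)
    (hM'_nonpos : ∀ x, 0 < x → M' x ≤ 0) : AntitoneOn M (Ioi 0) :=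
  antitoneOn_of_hasDerivWithinAt_nonpos (convex_Ioi 0)
    (fun x hx => (hM x hx).continuousAt.continuousWithinAt)
    (fun x hx => (hM x (interior_subset hx)).hasDerivWithinAt)
    (fun x hx => hM'_nonpos x (interior_subset hx))

theorem monotoneOn_Ioi_add_mul_log (hM : ∀ x, 0 < x → HasDerivAt M (M' x) x)
    (hM'_ge : ∀ x, 0 < x → -K ≤ x * M' x) :
    MonotoneOn (fun x => M x + K * log x) (Ioi 0) := by
  have hderiv : ∀ x, 0 < x → HasDerivAt (fun x => M x + K * log x) (M' x + K * x⁻¹) x :=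
    fun x hx => (hM x hx).add ((hasDerivAt_log hx.ne').const_mul K)
  refine monotoneOn_of_hasDerivWithinAt_nonneg (convex_Ioi 0)
    (fun x hx => (hderiv x hx).continuousAt.continuousWithinAt)
    (fun x hx => (hderiv x (interior_subset hx)).hasDerivWithinAt) fun x hx => ?_
  have hx : 0 < x := interior_subset hx
  calc 0 ≤ x⁻¹ * (x * M' x + K) := mul_nonneg (inv_pos.2 hx).le (by linarith [hM'_ge x hx])
    _ = M' x + K * x⁻¹ := by rw [mul_add, inv_mul_cancel_left₀ hx.ne', mul_comm]

theorem le_add_mul_abs_log_of_hasDerivAt (hM : ∀ x, 0 < x → HasDerivAt M (M' x) x)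
    (hM'_nonpos : ∀ x, 0 < x → M' x ≤ 0) (hM'_ge : ∀ x, 0 < x → -K ≤ x * M' x)
    {x : ℝ} (hx : 0 < x) : M x ≤ M 1 + K * |log x| := by
  have hK : 0 ≤ K := by linarith [hM'_ge 1 one_pos, hM'_nonpos 1 one_pos]
  rcases le_or_gt 1 x with h1 | h1
  · have := antitoneOn_Ioi_of_hasDerivAt_nonpos hM hM'_nonpos (mem_Ioi.2 one_pos) (mem_Ioi.2 hx) h1
    nlinarith [abs_nonneg (log x)]
  · have := monotoneOn_Ioi_add_mul_log hM hM'_ge (mem_Ioi.2 hx) (mem_Ioi.2 one_pos) h1.le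
    rw [abs_of_neg (log_neg hx h1)]
    simp only [log_one, mul_zero, add_zero] at this
    linarith

theorem exists_le_mul_one_add_abs_log_of_hasDerivAt
    (hM : ∀ x, 0 < x → HasDerivAt M (M' x) x)
    (hM'_nonpos : ∀ x, 0 < x → M' x ≤ 0) (hM'_ge : ∀ x, 0 < x → -K ≤ x * M' x) :
    ∃ C, ∀ x, 0 < x → M x ≤ C * (1 + |log x|) := by
  have hK : 0 ≤ K := by linarith [hM'_ge 1 one_pos, hM'_nonpos 1 one_pos]
  refine ⟨|M 1| + K, fun x hx => ?_⟩
  have := le_add_mul_abs_log_of_hasDerivAt hM hM'_nonpos hM'_ge hx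
  nlinarith [le_abs_self (M 1), abs_nonneg (M 1), abs_nonneg (log x)]

end Real

theorem entropy_bound_low_temperature_general
    (γ c : ℝ) (hγ : 1 < γ) (P P' M : ℝ → ℝ)
    (hstab : ∀ Z : ℝ, 0 < Z → 0 < (γ * P Z - P' Z * Z) / Z ∧ (γ * P Z - P' Z * Z) / Z ≤ c)
    (hM : ∀ Z : ℝ, 0 < Z →
      HasDerivAt M (-(1 / (γ - 1)) * (γ * P Z - P' Z * Z) / Z ^ 2) Z) :
    ∃ C : ℝ, ∀ ρ θ : ℝ, 0 < ρ → θ ∈ Ioo (0:ℝ) 1 →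
      M (ρ * θ ^ (-(1 / (γ - 1)))) ≤ C * (1 + |Real.log ρ|) := by
  have hγ1 : 0 < 1 / (γ - 1) := one_div_pos.2 (sub_pos.2 hγ)
  have hscaled : ∀ Z : ℝ, 0 < Z → Z * (-(1 / (γ - 1)) * (γ * P Z - P' Z * Z) / Z ^ 2)
      = -(1 / (γ - 1)) * ((γ * P Z - P' Z * Z) / Z) := fun Z hZ => by
    field_simp
  have hM'_nonpos : ∀ Z : ℝ, 0 < Z → -(1 / (γ - 1)) * (γ * P Z - P' Z * Z) / Z ^ 2 ≤ 0 :=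
    fun Z hZ => nonpos_of_mul_nonpos_right (by rw [hscaled Z hZ]; nlinarith [hstab Z hZ]) hZ
  have hM'_ge : ∀ Z : ℝ, 0 < Z →
      -(1 / (γ - 1) * c) ≤ Z * (-(1 / (γ - 1)) * (γ * P Z - P' Z * Z) / Z ^ 2) :=
    fun Z hZ => by rw [hscaled Z hZ]; nlinarith [hstab Z hZ]
  obtain ⟨C, hC⟩ := Real.exists_le_mul_one_add_abs_log_of_hasDerivAt hM hM'_nonpos hM'_ge
  refine ⟨C, fun ρ θ hρ hθ => ?_⟩
  have hθ_pow : 1 ≤ θ ^ (-(1 / (γ - 1))) :=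
    Real.one_le_rpow_of_pos_of_le_one_of_nonpos hθ.1 hθ.2.le (neg_nonpos.2 hγ1.le)
  calc M (ρ * θ ^ (-(1 / (γ - 1)))) ≤ M ρ :=
        Real.antitoneOn_Ioi_of_hasDerivAt_nonpos hM hM'_nonpos hρ
          (mul_pos hρ (one_pos.trans_le hθ_pow)) (le_mul_of_one_le_right hρ.le hθ_pow)
    _ ≤ C * (1 + |Real.log ρ|) := hC ρ hρ

/-- Under the structural hypotheses on `P` (with `γ > 1`) and with `M` having derivative
`M'(Z) = −(1/(γ−1))(γP(Z) − P'(Z)Z)/Z²` and `M(Z) → 0` as `Z → ∞`, the entropy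
`s₁(ρ,θ) = M(ρ θ^{−1/(γ−1)})` satisfies `s₁(ρ,θ) ≤ C(1 + |log ρ|)` for all
`ρ ∈ (0,∞)` and `θ ∈ (0,1)`. -/
theorem entropy_bound_low_temperature
    (γ c pinf : ℝ) (hγ : 1 < γ) (hpinf : 0 < pinf) (P P' M : ℝ → ℝ)
    (hP : ∀ Z : ℝ, 0 ≤ Z → HasDerivAt P (P' Z) Z)
    (hP0 : P 0 = 0)
    (hP' : ∀ Z : ℝ, 0 ≤ Z → 0 < P' Z)
    (hstab : ∀ Z : ℝ, 0 < Z → 0 < (γ * P Z - P' Z * Z) / Z ∧ (γ * P Z - P' Z * Z) / Z ≤ c)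
    (hPinf : Tendsto (fun Z => P Z / Z ^ γ) atTop (nhds pinf))
    (hM : ∀ Z : ℝ, 0 < Z →
      HasDerivAt M (-(1 / (γ - 1)) * (γ * P Z - P' Z * Z) / Z ^ 2) Z)
    (hMinf : Tendsto M atTop (nhds 0)) :
    ∃ C : ℝ, ∀ ρ θ : ℝ, 0 < ρ → θ ∈ Ioo (0:ℝ) 1 →
      M (ρ * θ ^ (-(1 / (γ - 1)))) ≤ C * (1 + |Real.log ρ|) :=
  entropy_bound_low_temperature_general γ c hγ P P' M hstab hM
end

section
/- Under the same structural hypotheses on P and M, there exists C such that s₁(ρ,θ) = M(ρ θ^{−1/(γ−1)}) ≤ C(1 + |log ρ| + log θ) for all ρ ∈ (0,∞) and θ ∈ (1,∞). -/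
open Set Filter

/-! The bound on `(γP − P'Z)/Z` gives `|M'(Z)| ≤ K/Z` with `K = c/(γ−1)`, i.e. `t ↦ M(eᵗ)` is
`K`-Lipschitz. Hence `M(Z) ≤ M(1) + K|log Z|`, and `log(ρθ^{−1/(γ−1)}) = log ρ − log θ/(γ−1)`. -/

theorem abs_sub_le_mul_abs_log_of_abs_deriv_le {f f' : ℝ → ℝ} {K : ℝ}
    (hf : ∀ x, 0 < x → HasDerivAt f (f' x) x) (bound : ∀ x, 0 < x → |f' x| ≤ K / x)
    {z : ℝ} (hz : 0 < z) : |f z - f 1| ≤ K * |Real.log z| := by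
  have hg : ∀ t ∈ univ, HasDerivWithinAt (f ∘ Real.exp) (f' (Real.exp t) * Real.exp t) univ t :=
    fun t _ => ((hf _ (Real.exp_pos t)).comp t (Real.hasDerivAt_exp t)).hasDerivWithinAt
  have hg_bound : ∀ t ∈ univ, ‖f' (Real.exp t) * Real.exp t‖ ≤ K := fun t _ => by
    rw [Real.norm_eq_abs, abs_mul, Real.abs_exp, ← le_div_iff₀ (Real.exp_pos t)]
    exact bound _ (Real.exp_pos t)
  simpa [Real.exp_log hz] using
    convex_univ.norm_image_sub_le_of_norm_hasDerivWithin_le hg hg_bound (mem_univ 0)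
      (mem_univ (Real.log z))

theorem abs_log_mul_rpow_le {ρ θ : ℝ} (hρ : 0 < ρ) (hθ : 0 < θ) (s : ℝ) :
    |Real.log (ρ * θ ^ s)| ≤ |Real.log ρ| + |s| * |Real.log θ| := by
  rw [Real.log_mul hρ.ne' (Real.rpow_pos_of_pos hθ s).ne', Real.log_rpow hθ, ← abs_mul]
  exact abs_add_le _ _

theorem abs_neg_one_div_mul_div_sq_le {γ c g Z : ℝ} (hγ : 1 < γ) (hZ : 0 < Z)
    (hg : 0 ≤ g / Z) (hgc : g / Z ≤ c) : |-(1 / (γ - 1)) * g / Z ^ 2| ≤ c / (γ - 1) / Z := by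
  have hγ1 : 0 < γ - 1 := sub_pos.2 hγ
  have hrw : -(1 / (γ - 1)) * g / Z ^ 2 = -(g / Z / (γ - 1) / Z) := by field_simp
  rw [hrw, abs_neg, abs_of_nonneg (by positivity)]
  exact div_le_div_of_nonneg_right (div_le_div_of_nonneg_right hgc hγ1.le) hZ.le

theorem entropy_bound_high_temperature_general
    (γ c : ℝ) (hγ : 1 < γ) (P P' M : ℝ → ℝ)
    (hstab : ∀ Z : ℝ, 0 < Z → 0 < (γ * P Z - P' Z * Z) / Z ∧ (γ * P Z - P' Z * Z) / Z ≤ c)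
    (hM : ∀ Z : ℝ, 0 < Z →
      HasDerivAt M (-(1 / (γ - 1)) * (γ * P Z - P' Z * Z) / Z ^ 2) Z) :
    ∃ C : ℝ, ∀ ρ θ : ℝ, 0 < ρ → 1 < θ →
      M (ρ * θ ^ (-(1 / (γ - 1)))) ≤ C * (1 + |Real.log ρ| + Real.log θ) := by
  have hγ1 : 0 < γ - 1 := sub_pos.2 hγ
  set K := c / (γ - 1)
  have hK : 0 ≤ K := div_nonneg ((hstab 1 one_pos).1.le.trans (hstab 1 one_pos).2) hγ1.le
  have hM' : ∀ Z, 0 < Z → |-(1 / (γ - 1)) * (γ * P Z - P' Z * Z) / Z ^ 2| ≤ K / Z :=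
    fun Z hZ => abs_neg_one_div_mul_div_sq_le hγ hZ (hstab Z hZ).1.le (hstab Z hZ).2
  refine ⟨|M 1| + K + K / (γ - 1), fun ρ θ hρ hθ => ?_⟩
  have hθ0 : 0 < θ := one_pos.trans hθ
  have hlogθ : 0 < Real.log θ := Real.log_pos hθ
  have hZ := abs_sub_le_mul_abs_log_of_abs_deriv_le hM hM'
    (mul_pos hρ (Real.rpow_pos_of_pos hθ0 (-(1 / (γ - 1)))))
  have hlog := abs_log_mul_rpow_le hρ hθ0 (-(1 / (γ - 1)))
  rw [abs_neg, abs_of_pos (one_div_pos.2 hγ1), abs_of_pos hlogθ] at hlog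
  have hK' : 0 ≤ K / (γ - 1) := div_nonneg hK hγ1.le
  calc M (ρ * θ ^ (-(1 / (γ - 1))))
      ≤ M 1 + K * |Real.log (ρ * θ ^ (-(1 / (γ - 1))))| := by linarith [abs_le.1 hZ]
    _ ≤ |M 1| + K * |Real.log ρ| + K / (γ - 1) * Real.log θ := by
      have := mul_le_mul_of_nonneg_left hlog hK
      rw [mul_add, ← mul_assoc, mul_one_div] at this
      linarith [le_abs_self (M 1)]
    _ ≤ (|M 1| + K + K / (γ - 1)) * (1 + |Real.log ρ| + Real.log θ) := by
      nlinarith [abs_nonneg (M 1), abs_nonneg (Real.log ρ),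
        mul_nonneg (add_nonneg (abs_nonneg (M 1)) hK') (abs_nonneg (Real.log ρ)),
        mul_nonneg (add_nonneg (abs_nonneg (M 1)) hK) hlogθ.le]

/-- Under the structural hypotheses on `P` (with `γ > 1`) and with `M` having derivative
`M'(Z) = −(1/(γ−1))(γP(Z) − P'(Z)Z)/Z²` and `M(Z) → 0` as `Z → ∞`, the entropy
`s₁(ρ,θ) = M(ρ θ^{−1/(γ−1)})` satisfies `s₁(ρ,θ) ≤ C(1 + |log ρ| + log θ)` for all
`ρ ∈ (0,∞)` and `θ ∈ (1,∞)`. -/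
theorem entropy_bound_high_temperature
    (γ c pinf : ℝ) (hγ : 1 < γ) (hpinf : 0 < pinf) (P P' M : ℝ → ℝ)
    (hP : ∀ Z : ℝ, 0 ≤ Z → HasDerivAt P (P' Z) Z)
    (hP0 : P 0 = 0)
    (hP' : ∀ Z : ℝ, 0 ≤ Z → 0 < P' Z)
    (hstab : ∀ Z : ℝ, 0 < Z → 0 < (γ * P Z - P' Z * Z) / Z ∧ (γ * P Z - P' Z * Z) / Z ≤ c)
    (hPinf : Tendsto (fun Z => P Z / Z ^ γ) atTop (nhds pinf))
    (hM : ∀ Z : ℝ, 0 < Z →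
      HasDerivAt M (-(1 / (γ - 1)) * (γ * P Z - P' Z * Z) / Z ^ 2) Z)
    (hMinf : Tendsto M atTop (nhds 0)) :
    ∃ C : ℝ, ∀ ρ θ : ℝ, 0 < ρ → 1 < θ →
      M (ρ * θ ^ (-(1 / (γ - 1)))) ≤ C * (1 + |Real.log ρ| + Real.log θ) :=
  entropy_bound_high_temperature_general γ c hγ P P' M hstab hM
end
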